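/- arXiv:2402.00879 — 2 statements merged into one kernel-verified Lean document; each statement's English description precedes it below -/
import Mathlib

section
/- For all t ∈ [-1, 1], arccos(t)/π ≥ 0.87854 · (1 - t)/2. -/
/-!
Put t = cos θ with θ ∈ [0, π]; the claim becomes 0.87854 · (1 - cos θ)/2 ≤ θ/π. For θ ≤ 1.44 the
bound 1 - cos θ ≤ θ²/2 suffices, because 1.44 < 4/(0.87854 π). For larger θ put s = π - θ, so
that cos θ = -cos s, and bound cos s above by its Taylor polynomial of degree 8: the Taylor
polynomials of cos and sin alternately over- and underestimate them on [0, ∞), since each error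
term is the integral of the previous one. What remains is a polynomial inequality in s.
-/

open Finset Real
open scoped Nat

theorem nonneg_of_hasDerivAt_nonneg {f f' : ℝ → ℝ} (hf : ∀ x, HasDerivAt f (f' x) x)
    (hf' : ∀ x, 0 ≤ x → 0 ≤ f' x) (h0 : f 0 = 0) {x : ℝ} (hx : 0 ≤ x) : 0 ≤ f x := by
  have hmono : MonotoneOn f (Set.Ici 0) :=
    monotoneOn_of_hasDerivWithinAt_nonneg (convex_Ici 0)
      (fun y _ ↦ (hf y).continuousAt.continuousWithinAt) (fun y _ ↦ (hf y).hasDerivWithinAt)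
      (fun y hy ↦ hf' y (interior_subset hy))
  simpa [h0] using hmono Set.self_mem_Ici hx hx

namespace Real

noncomputable def cosTaylor (n : ℕ) (x : ℝ) : ℝ :=
  ∑ k ∈ range n, (-1) ^ k * x ^ (2 * k) / (2 * k)!

noncomputable def sinTaylor (n : ℕ) (x : ℝ) : ℝ :=
  ∑ k ∈ range n, (-1) ^ k * x ^ (2 * k + 1) / (2 * k + 1)!

theorem hasDerivAt_sinTaylor (n : ℕ) (x : ℝ) : HasDerivAt (sinTaylor n) (cosTaylor n x) x := by
  induction n with
  | zero =>
    have h : sinTaylor 0 = fun _ ↦ 0 := funext fun y ↦ by simp [sinTaylor]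
    simpa [h, cosTaylor] using hasDerivAt_const x (0 : ℝ)
  | succ n ih =>
    have h : sinTaylor (n + 1) =
        fun y ↦ sinTaylor n y + (-1) ^ n * y ^ (2 * n + 1) / (2 * n + 1)! :=
      funext fun y ↦ by simp only [sinTaylor, sum_range_succ]
    rw [h]
    refine (ih.add (((hasDerivAt_pow _ x).const_mul _).div_const _)).congr_deriv ?_
    simp only [cosTaylor, sum_range_succ, Nat.factorial_succ]
    push_cast
    field_simp

theorem hasDerivAt_cosTaylor (n : ℕ) (x : ℝ) :
    HasDerivAt (cosTaylor (n + 1)) (-sinTaylor n x) x := by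
  induction n with
  | zero =>
    have h : cosTaylor 1 = fun _ ↦ 1 := funext fun y ↦ by simp [cosTaylor]
    simpa [h, sinTaylor] using hasDerivAt_const x (1 : ℝ)
  | succ n ih =>
    have h : cosTaylor (n + 2) =
        fun y ↦ cosTaylor (n + 1) y + (-1) ^ (n + 1) * y ^ (2 * (n + 1)) / (2 * (n + 1))! :=
      funext fun y ↦ by simp only [cosTaylor, sum_range_succ _ (n + 1)]
    rw [h]
    refine (ih.add (((hasDerivAt_pow _ x).const_mul _).div_const _)).congr_deriv ?_
    simp only [sinTaylor, sum_range_succ, mul_add, Nat.factorial_succ]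
    push_cast
    field_simp
    ring

theorem cosTaylor_sinTaylor_alternating (n : ℕ) {x : ℝ} (hx : 0 ≤ x) :
    0 ≤ (-1) ^ (n + 1) * (cos x - cosTaylor (n + 1) x) ∧
      0 ≤ (-1) ^ (n + 1) * (sin x - sinTaylor (n + 1) x) := by
  induction n generalizing x with
  | zero =>
    simp only [cosTaylor, sinTaylor]
    norm_num
    exact ⟨cos_le_one x, sin_le hx⟩
  | succ n ih =>
    have hcos : ∀ y, 0 ≤ y → 0 ≤ (-1) ^ (n + 2) * (cos y - cosTaylor (n + 2) y) := by
      refine fun y hy ↦ nonneg_of_hasDerivAt_nonneg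
        (f := fun y ↦ (-1) ^ (n + 2) * (cos y - cosTaylor (n + 2) y)) (fun z ↦ ?_)
        (fun z hz ↦ (ih hz).2) (by simp [cosTaylor, sum_range_succ']) hy
      refine (((hasDerivAt_cos z).sub (hasDerivAt_cosTaylor (n + 1) z)).const_mul _).congr_deriv ?_
      ring
    refine ⟨hcos x hx, nonneg_of_hasDerivAt_nonneg
      (f := fun y ↦ (-1) ^ (n + 2) * (sin y - sinTaylor (n + 2) y)) (fun z ↦ ?_) hcos
      (by simp [sinTaylor]) hx⟩
    exact ((hasDerivAt_sin z).sub (hasDerivAt_sinTaylor (n + 2) z)).const_mul _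

theorem cos_le_cosTaylor_of_odd (m : ℕ) {x : ℝ} (hx : 0 ≤ x) :
    cos x ≤ cosTaylor (2 * m + 1) x := by
  have h := (cosTaylor_sinTaylor_alternating (2 * m) hx).1
  rw [pow_succ, pow_mul] at h
  norm_num at h
  linarith

end Real

/-- In the variable s = π - θ the inequality is nearly tight at s ≈ 0.8105 (θ ≈ 2.331, the angle
that determines the Goemans–Williamson constant), hence the double root in the certificate. -/
theorem goemansWilliamson_taylor_bound {s : ℝ} (h0 : 0 ≤ s) (h1 : s ≤ 1.701593) :
    s ≤ 3.141592 * (1 - 0.43927 * (1 + cosTaylor 5 s)) := by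
  have hcos : cosTaylor 5 s = 1 - s ^ 2 / 2 + s ^ 4 / 24 - s ^ 6 / 720 + s ^ 8 / 40320 := by
    simp only [cosTaylor, sum_range_succ, Nat.factorial]
    norm_num
    ring
  have hU : 0 ≤ 1.701593 - s := by linarith
  have T2 := mul_nonneg (sq_nonneg (s - 0.8105)) hU
  rw [hcos]
  nlinarith [mul_nonneg T2 h0, mul_nonneg (mul_nonneg T2 hU) h0,
    mul_nonneg (mul_nonneg (mul_nonneg T2 hU) h0) h0, mul_nonneg T2 (pow_nonneg h0 4),
    mul_nonneg T2 (pow_nonneg h0 5)]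

theorem goemansWilliamson_of_le {θ : ℝ} (h0 : 0 ≤ θ) (h1 : θ ≤ 1.44) :
    0.87854 * ((1 - cos θ) / 2) ≤ θ / π := by
  rw [le_div_iff₀ pi_pos]
  have hcos := one_sub_sq_div_two_le_cos (x := θ)
  have hπ := pi_lt_d6
  nlinarith [mul_nonneg (sub_nonneg.2 (cos_le_one θ)) (sub_nonneg.2 hπ.le),
    mul_nonneg h0 (sub_nonneg.2 h1)]

theorem goemansWilliamson_of_ge {θ : ℝ} (h0 : 1.44 ≤ θ) (h1 : θ ≤ π) :
    0.87854 * ((1 - cos θ) / 2) ≤ θ / π := by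
  rw [le_div_iff₀ pi_pos]
  set s := π - θ with hs
  have hs0 : 0 ≤ s := by linarith
  have hs1 : s ≤ 1.701593 := by linarith [pi_lt_d6]
  have hcos : cos θ = -cos s := by rw [hs, cos_pi_sub, neg_neg]
  have hT := cos_le_cosTaylor_of_odd 2 hs0
  have hkey := goemansWilliamson_taylor_bound hs0 hs1
  have hfac : 0 ≤ 1 - 0.43927 * (1 + cosTaylor 5 s) := by nlinarith
  nlinarith [mul_nonneg (sub_nonneg.2 pi_gt_d6.le) hfac, mul_nonneg pi_pos.le (sub_nonneg.2 hT)]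

theorem goemansWilliamson_of_mem_Icc {θ : ℝ} (hθ : θ ∈ Set.Icc 0 π) :
    0.87854 * ((1 - cos θ) / 2) ≤ θ / π := by
  rcases le_total θ 1.44 with h | h
  · exact goemansWilliamson_of_le hθ.1 h
  · exact goemansWilliamson_of_ge h hθ.2

theorem stmt_6 : ∀ t ∈ Set.Icc (-1 : ℝ) 1,
    Real.arccos t / Real.pi ≥ 0.87854 * ((1 - t) / 2) := by
  rintro t ⟨ht₁, ht₂⟩
  simpa only [cos_arccos ht₁ ht₂] using
    goemansWilliamson_of_mem_Icc ⟨arccos_nonneg t, arccos_le_pi t⟩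
end

section
/- Let W be a K×K matrix with nonnegative entries, let X be a PSD matrix with unit diagonal achieving SDP objective value S = ∑_{i≠j} W(i,j)(1 - X(i,j))/2, and suppose random hyperplane rounding produces signs y with P[y_i ≠ y_j] = arccos(X(i,j))/π. Then the expected cut value E[∑_{i≠j} W(i,j)·1{y_i ≠ y_j}] is at least 0.87854 · S. In particular it is at least 0.87854 times the optimal max-cut value. -/
/-!
Writing `t = cos θ` with `θ ∈ [0, π]`, the analytic inequality reads
`0.87854 π (1 - cos θ) ≤ 2 θ`. On `[0, π/2]` it follows from the chord bound
`1 - cos θ ≤ 2θ/π`. On `[π/2, π]` the function `1 - cos θ` is concave, and its tangent at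
`θ₀ ≈ 2.3311` (the Goemans–Williamson critical angle) passes just below the line `2θ / (0.87854 π)`
through the origin; checking this needs `sin` and `cos` at `θ₀ - π/2 = 0.7603` to about `10⁻⁵`,
which the alternating Taylor series provide. Summing the inequality entrywise against `W ≥ 0`
(the entries of a PSD matrix with unit diagonal lie in `[-1, 1]`) bounds the rounded cut from
below by `0.87854 S`; and every cut `y ∈ {±1}ᴷ` is the SDP objective of the feasible matrix
`y yᵀ`, so `S` dominates it.
-/

open Real Finset Filter Set Matrix
open scoped Nat

lemma ConcaveOn.le_add_mul_sub_of_hasDerivAt {S : Set ℝ} {f : ℝ → ℝ} {x y f' : ℝ}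
    (hf : ConcaveOn ℝ S f) (hx : x ∈ S) (hy : y ∈ S) (hf' : HasDerivAt f f' x) :
    f y ≤ f x + f' * (y - x) := by
  rcases lt_trichotomy x y with hxy | rfl | hyx
  · have := hf.slope_le_of_hasDerivAt hx hy hxy hf'
    rw [slope_def_field, div_le_iff₀ (sub_pos.2 hxy)] at this
    linarith
  · simp
  · have := hf.le_slope_of_hasDerivAt hy hx hyx hf'
    rw [slope_def_field, le_div_iff₀ (sub_pos.2 hyx)] at this
    linarith

lemma antitone_pow_div_factorial_two_mul_add {x : ℝ} (hx₀ : 0 ≤ x) {m : ℕ}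
    (hx : x ^ 2 ≤ (m + 1) * (m + 2)) :
    Antitone fun n : ℕ => x ^ (2 * n + m) / (2 * n + m)! := by
  refine antitone_nat_of_succ_le fun n => ?_
  have hk : (m + 1 : ℝ) * (m + 2) ≤ (2 * n + m + 1) * (2 * n + m + 2) := by gcongr <;> simp
  rw [show 2 * (n + 1) + m = 2 * n + m + 1 + 1 by ring, Nat.factorial_succ, Nat.factorial_succ,
    pow_succ, pow_succ, div_le_div_iff₀ (by positivity) (by positivity)]
  push_cast
  calc x ^ (2 * n + m) * x * x * ((2 * n + m)! : ℝ)
      = x ^ (2 * n + m) * ((2 * n + m)! : ℝ) * x ^ 2 := by ring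
    _ ≤ x ^ (2 * n + m) * ((2 * n + m)! : ℝ) * ((2 * n + m + 1) * (2 * n + m + 2)) := by
        gcongr
        exact hx.trans hk
    _ = _ := by ring

namespace Real

lemma tendsto_sin_partial_sum (x : ℝ) :
    Tendsto (fun n => ∑ i ∈ range n, (-1) ^ i * (x ^ (2 * i + 1) / (2 * i + 1)!)) atTop
      (nhds (sin x)) := by
  simpa only [mul_div_assoc] using (hasSum_sin x).tendsto_sum_nat

lemma tendsto_cos_partial_sum (x : ℝ) :
    Tendsto (fun n => ∑ i ∈ range n, (-1) ^ i * (x ^ (2 * i) / (2 * i)!)) atTop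
      (nhds (cos x)) := by
  simpa only [mul_div_assoc] using (hasSum_cos x).tendsto_sum_nat

lemma sin_le_partial_sum {x : ℝ} (hx₀ : 0 ≤ x) (hx : x ^ 2 ≤ 6) (k : ℕ) :
    sin x ≤ ∑ i ∈ range (2 * k + 1), (-1) ^ i * (x ^ (2 * i + 1) / (2 * i + 1)!) :=
  (antitone_pow_div_factorial_two_mul_add hx₀ (by norm_num; linarith)).tendsto_le_alternating_series
    (tendsto_sin_partial_sum x) k

lemma cos_le_partial_sum {x : ℝ} (hx₀ : 0 ≤ x) (hx : x ^ 2 ≤ 2) (k : ℕ) :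
    cos x ≤ ∑ i ∈ range (2 * k + 1), (-1) ^ i * (x ^ (2 * i) / (2 * i)!) :=
  (antitone_pow_div_factorial_two_mul_add (m := 0) hx₀ (by norm_num; linarith)
    ).tendsto_le_alternating_series (tendsto_cos_partial_sum x) k

lemma partial_sum_le_cos {x : ℝ} (hx₀ : 0 ≤ x) (hx : x ^ 2 ≤ 2) (k : ℕ) :
    ∑ i ∈ range (2 * k), (-1) ^ i * (x ^ (2 * i) / (2 * i)!) ≤ cos x :=
  (antitone_pow_div_factorial_two_mul_add (m := 0) hx₀ (by norm_num; linarith)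
    ).alternating_series_le_tendsto (tendsto_cos_partial_sum x) k

end Real

lemma sin_cos_bounds_0_7603 :
    sin 0.7603 ≤ 0.68914 ∧ 0.72462 ≤ cos 0.7603 ∧ cos 0.7603 ≤ 0.72463 := by
  refine ⟨(sin_le_partial_sum (by norm_num) (by norm_num) 2).trans ?_,
    le_trans ?_ (partial_sum_le_cos (by norm_num) (by norm_num) 2),
    (cos_le_partial_sum (by norm_num) (by norm_num) 2).trans ?_⟩ <;>
  norm_num [sum_range_succ, Nat.factorial]

lemma gw_mul_one_sub_cos_le_of_le_pi_div_two {θ : ℝ} (h₀ : 0 ≤ θ) (h : θ ≤ π / 2) :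
    0.87854 * π * (1 - cos θ) ≤ 2 * θ := by
  have hchord := one_sub_mul_le_cos h₀ h
  have : 2 / π * θ * π = 2 * θ := by field_simp
  nlinarith [pi_pos]

lemma gw_mul_one_sub_cos_le_of_pi_div_two_le {θ : ℝ} (h : π / 2 ≤ θ) (hπ : θ ≤ π) :
    0.87854 * π * (1 - cos θ) ≤ 2 * θ := by
  obtain ⟨x, rfl⟩ : ∃ x, θ = x + π / 2 := ⟨θ - π / 2, by ring⟩
  rw [cos_add_pi_div_two]
  have htangent : sin x ≤ sin 0.7603 + cos 0.7603 * (x - 0.7603) :=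
    strictConcaveOn_sin_Icc.concaveOn.le_add_mul_sub_of_hasDerivAt
      ⟨by norm_num, by linarith [pi_gt_three]⟩ ⟨by linarith, by linarith⟩ (hasDerivAt_sin _)
  obtain ⟨hsin, hcos_lower, hcos_upper⟩ := sin_cos_bounds_0_7603
  have := pi_gt_d6
  have := pi_lt_d6
  rcases le_total x 0.7603 with hx | hx
  · nlinarith [mul_le_mul_of_nonneg_right hcos_lower (by linarith : (0:ℝ) ≤ 0.7603 - x)]
  · nlinarith [mul_le_mul_of_nonneg_right hcos_upper (by linarith : (0:ℝ) ≤ x - 0.7603)]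

lemma gw_mul_one_sub_le_arccos_div_pi {t : ℝ} (ht : |t| ≤ 1) :
    0.87854 * (1 - t) / 2 ≤ arccos t / π := by
  obtain ⟨h₁, h₂⟩ := abs_le.mp ht
  have key : 0.87854 * π * (1 - cos (arccos t)) ≤ 2 * arccos t := by
    rcases le_total (arccos t) (π / 2) with h | h
    · exact gw_mul_one_sub_cos_le_of_le_pi_div_two (arccos_nonneg t) h
    · exact gw_mul_one_sub_cos_le_of_pi_div_two_le h (arccos_le_pi t)
  rw [cos_arccos h₁ h₂] at key
  rw [le_div_iff₀ pi_pos]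
  linarith

lemma Matrix.PosSemidef.sq_apply_le_mul_apply {n : Type*} [Fintype n] [DecidableEq n]
    {X : Matrix n n ℝ} (hX : X.PosSemidef) (i j : n) : X i j ^ 2 ≤ X i i * X j j := by
  have hdet := (hX.submatrix ![i, j]).det_nonneg
  have hsymm : X j i = X i j := by simpa using hX.1.apply i j
  rw [det_fin_two] at hdet
  simp only [submatrix_apply, cons_val_zero, cons_val_one, hsymm] at hdet
  linarith

lemma Matrix.PosSemidef.abs_apply_le_one {n : Type*} [Fintype n] [DecidableEq n]
    {X : Matrix n n ℝ} (hX : X.PosSemidef) (hdiag : ∀ i, X i i = 1) (i j : n) :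
    |X i j| ≤ 1 := by
  have := hX.sq_apply_le_mul_apply i j
  rw [hdiag, hdiag, one_mul] at this
  exact (sq_le_one_iff_abs_le_one _).mp this

lemma Matrix.posSemidef_vecMulVec_self {n : Type*} [Fintype n] (y : n → ℝ) :
    (vecMulVec y y).PosSemidef := by
  simpa using posSemidef_vecMulVec_self_star y

lemma Matrix.vecMulVec_self_apply_self_of_sign {n : Type*} {y : n → ℝ}
    (hy : ∀ i, y i = -1 ∨ y i = 1) (i : n) : vecMulVec y y i i = 1 := by
  rcases hy i with hi | hi <;> norm_num [vecMulVec_apply, hi]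

section MaxCut

variable {ι : Type*} [Fintype ι] [DecidableEq ι]

noncomputable def sdpObjective (W X : Matrix ι ι ℝ) : ℝ :=
  ∑ i, ∑ j, if i ≠ j then W i j * (1 - X i j) / 2 else 0

noncomputable def cutWeight (W : Matrix ι ι ℝ) (y : ι → ℝ) : ℝ :=
  ∑ i, ∑ j, if i ≠ j ∧ y i ≠ y j then W i j else 0

noncomputable def expectedRoundedCut (W X : Matrix ι ι ℝ) : ℝ :=
  ∑ i, ∑ j, if i ≠ j then W i j * (arccos (X i j) / π) else 0

lemma cutWeight_eq_sdpObjective_vecMulVec (W : Matrix ι ι ℝ) {y : ι → ℝ}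
    (hy : ∀ i, y i = -1 ∨ y i = 1) : cutWeight W y = sdpObjective W (vecMulVec y y) := by
  refine sum_congr rfl fun i _ => sum_congr rfl fun j _ => ?_
  by_cases hij : i = j
  · simp [hij]
  · rcases hy i with hi | hi <;> rcases hy j with hj | hj <;>
      norm_num [hij, vecMulVec_apply, hi, hj]

lemma gw_mul_sdpObjective_le_expectedRoundedCut {W X : Matrix ι ι ℝ} (hW : ∀ i j, 0 ≤ W i j)
    (hX : X.PosSemidef) (hdiag : ∀ i, X i i = 1) :
    0.87854 * sdpObjective W X ≤ expectedRoundedCut W X := by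
  rw [sdpObjective, mul_sum]
  refine sum_le_sum fun i _ => ?_
  rw [mul_sum]
  refine sum_le_sum fun j _ => ?_
  split_ifs
  · have := gw_mul_one_sub_le_arccos_div_pi (hX.abs_apply_le_one hdiag i j)
    calc 0.87854 * (W i j * (1 - X i j) / 2) = W i j * (0.87854 * (1 - X i j) / 2) := by ring
      _ ≤ W i j * (arccos (X i j) / π) := mul_le_mul_of_nonneg_left this (hW i j)
  · simp

end MaxCut

theorem stmt_7_general (K : ℕ) (W X : Matrix (Fin K) (Fin K) ℝ)
    (hW : ∀ i j, 0 ≤ W i j)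
    (hpsd : X.PosSemidef) (hdiag : ∀ i, X i i = 1)
    (S : ℝ)
    (hS : S = ∑ i : Fin K, ∑ j : Fin K, if i ≠ j then W i j * (1 - X i j) / 2 else 0)
    (hopt : ∀ X' : Matrix (Fin K) (Fin K) ℝ, X'.PosSemidef → (∀ i, X' i i = 1) →
      (∑ i : Fin K, ∑ j : Fin K, if i ≠ j then W i j * (1 - X' i j) / 2 else 0) ≤ S)
    (P : Fin K → Fin K → ℝ)
    (hP : ∀ i j, P i j = Real.arccos (X i j) / Real.pi) :
    0.87854 * S ≤
      (∑ i : Fin K, ∑ j : Fin K, if i ≠ j then W i j * P i j else 0) ∧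
    ∀ y : Fin K → ℝ, (∀ i, y i = -1 ∨ y i = 1) →
      0.87854 * (∑ i : Fin K, ∑ j : Fin K,
          if i ≠ j ∧ y i ≠ y j then W i j else 0) ≤
        (∑ i : Fin K, ∑ j : Fin K, if i ≠ j then W i j * P i j else 0) := by
  obtain rfl : P = fun i j => arccos (X i j) / π := funext₂ hP
  have hrounding : 0.87854 * S ≤ expectedRoundedCut W X :=
    hS ▸ gw_mul_sdpObjective_le_expectedRoundedCut hW hpsd hdiag
  refine ⟨hrounding, fun y hy => le_trans ?_ hrounding⟩
  have hcut : cutWeight W y ≤ S := by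
    rw [cutWeight_eq_sdpObjective_vecMulVec W hy]
    exact hopt _ (posSemidef_vecMulVec_self y) (vecMulVec_self_apply_self_of_sign hy)
  exact mul_le_mul_of_nonneg_left hcut (by norm_num)

theorem stmt_7 (K : ℕ) (W X : Matrix (Fin K) (Fin K) ℝ)
    (hW : ∀ i j, 0 ≤ W i j) (hWdiag : ∀ k, W k k = 0)
    (hpsd : X.PosSemidef) (hdiag : ∀ i, X i i = 1)
    (S : ℝ)
    (hS : S = ∑ i : Fin K, ∑ j : Fin K, if i ≠ j then W i j * (1 - X i j) / 2 else 0)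
    (hopt : ∀ X' : Matrix (Fin K) (Fin K) ℝ, X'.PosSemidef → (∀ i, X' i i = 1) →
      (∑ i : Fin K, ∑ j : Fin K, if i ≠ j then W i j * (1 - X' i j) / 2 else 0) ≤ S)
    (P : Fin K → Fin K → ℝ)
    (hP : ∀ i j, P i j = Real.arccos (X i j) / Real.pi) :
    0.87854 * S ≤
      (∑ i : Fin K, ∑ j : Fin K, if i ≠ j then W i j * P i j else 0) ∧
    ∀ y : Fin K → ℝ, (∀ i, y i = -1 ∨ y i = 1) →
      0.87854 * (∑ i : Fin K, ∑ j : Fin K,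
          if i ≠ j ∧ y i ≠ y j then W i j else 0) ≤
        (∑ i : Fin K, ∑ j : Fin K, if i ≠ j then W i j * P i j else 0) :=
  stmt_7_general K W X hW hpsd hdiag S hS hopt P hP
end
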